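/- arXiv:1403.2645 — 3 statements merged into one kernel-verified Lean document; each statement's English description precedes it below -/
import Mathlib

section
/- Let A, B : U → V and A', B' : U' → V' be surjective linear maps of finite-dimensional real (or complex) vector spaces, topologically equivalent via homeomorphisms φ : U → U' and ψ : V → V' (ψ∘A = A'∘φ, ψ∘B = B'∘φ). Then for every v ∈ V, ψ(v + A(ker B)) = ψ(v) + A'(ker B'), so ψ induces a well-defined homeomorphism V/A(ker B) → V'/A'(ker B'). -/
/-!
From the two commuting squares and the surjectivity of `A` and `A'`, `ψ a - ψ b` lies in
`A'(ker B')` exactly when `a - b` lies in `A(ker B)`. So `ψ` carries each coset onto a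
coset, and it respects the two quotient relations, which makes it descend to a homeomorphism
of the quotient spaces.
-/

open Function LinearMap Submodule

section

variable {R U V U' V' : Type*} [Ring R]
  [AddCommGroup U] [Module R U] [AddCommGroup V] [Module R V]
  [AddCommGroup U'] [Module R U'] [AddCommGroup V'] [Module R V']

/-- With `b = A u` and `a - b = A k`, `B k = 0`, the witness is `φ (u + k) - φ u`:
`B' ∘ φ = ψ ∘ B` takes the same value at `u + k` and at `u`. -/
theorem sub_mem_map_ker_of_comp_eq {A B : U →ₗ[R] V} {A' B' : U' →ₗ[R] V'}
    (hA : Surjective A) {φ : U → U'} {ψ : V → V'}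
    (hcA : ∀ u, ψ (A u) = A' (φ u)) (hcB : ∀ u, ψ (B u) = B' (φ u))
    {a b : V} (hab : a - b ∈ (ker B).map A) : ψ a - ψ b ∈ (ker B').map A' := by
  obtain ⟨u, rfl⟩ := hA b
  obtain ⟨k, hk, hAk⟩ := hab
  have ha : a = A (u + k) := by rw [map_add, hAk, add_sub_cancel]
  refine ⟨φ (u + k) - φ u, ?_, ?_⟩
  · have hBk : B k = 0 := hk
    rw [SetLike.mem_coe, mem_ker, map_sub, ← hcB, ← hcB, map_add, hBk, add_zero, sub_self]
  · rw [map_sub, ← hcA, ← hcA, ha]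

theorem sub_mem_map_ker_iff_of_comp_eq {A B : U →ₗ[R] V} {A' B' : U' →ₗ[R] V'}
    (hA : Surjective A) (hA' : Surjective A') (φ : U ≃ U') (ψ : V ≃ V')
    (hcA : ∀ u, ψ (A u) = A' (φ u)) (hcB : ∀ u, ψ (B u) = B' (φ u)) (a b : V) :
    ψ a - ψ b ∈ (ker B').map A' ↔ a - b ∈ (ker B).map A := by
  have symm_comp_eq : ∀ {C : U →ₗ[R] V} {C' : U' →ₗ[R] V'}, (∀ u, ψ (C u) = C' (φ u)) →
      ∀ u', ψ.symm (C' u') = C (φ.symm u') := fun hc u' =>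
    ψ.symm_apply_eq.2 (by rw [hc, φ.apply_symm_apply])
  refine ⟨fun h => ?_, sub_mem_map_ker_of_comp_eq hA hcA hcB⟩
  simpa using sub_mem_map_ker_of_comp_eq hA' (symm_comp_eq hcA) (symm_comp_eq hcB) h

end

theorem Equiv.image_add_left_image_eq {V V' : Type*} [AddCommGroup V] [AddCommGroup V']
    {s : Set V} {s' : Set V'} (e : V ≃ V') (he : ∀ a b, e a - e b ∈ s' ↔ a - b ∈ s) (v : V) :
    e '' ((v + ·) '' s) = (e v + ·) '' s' := by
  ext y
  obtain ⟨w, rfl⟩ := e.surjective y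
  simp only [e.injective.mem_set_image, Set.image_add_left, Set.mem_preimage, neg_add_eq_sub, he]

theorem stmt5_general (𝕜 : Type*) [RCLike 𝕜] (U V U' V' : Type*)
    [NormedAddCommGroup U] [NormedSpace 𝕜 U]
    [NormedAddCommGroup V] [NormedSpace 𝕜 V]
    [NormedAddCommGroup U'] [NormedSpace 𝕜 U']
    [NormedAddCommGroup V'] [NormedSpace 𝕜 V']
    (A B : U →ₗ[𝕜] V) (A' B' : U' →ₗ[𝕜] V')
    (hA : Function.Surjective A)
    (hA' : Function.Surjective A')
    (φ : U ≃ₜ U') (ψ : V ≃ₜ V')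
    (hcA : ∀ u : U, ψ (A u) = A' (φ u)) (hcB : ∀ u : U, ψ (B u) = B' (φ u)) :
    (∀ v : V, ψ '' ((fun w => v + w) '' (Submodule.map A (LinearMap.ker B) : Set V)) =
      (fun w => ψ v + w) '' (Submodule.map A' (LinearMap.ker B') : Set V')) ∧
    ∃ ψ₂ : (V ⧸ Submodule.map A (LinearMap.ker B)) ≃ₜ
        (V' ⧸ Submodule.map A' (LinearMap.ker B')),
      ∀ v : V, ψ₂ (Submodule.Quotient.mk v) = Submodule.Quotient.mk (ψ v) := by
  have hψ := sub_mem_map_ker_iff_of_comp_eq hA hA' φ.toEquiv ψ.toEquiv hcA hcB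
  refine ⟨ψ.toEquiv.image_add_left_image_eq hψ, ?_⟩
  refine ⟨Homeomorph.Quotient.congr ψ fun a b => ?_, fun v => rfl⟩
  rw [quotientRel_def, quotientRel_def]
  exact (hψ a b).symm

/-- Second part of Lemma 5: ψ maps each coset v + A(ker B) onto ψ(v) + A'(ker B'),
hence induces a well-defined homeomorphism V/A(ker B) → V'/A'(ker B'). -/
theorem stmt5 (𝕜 : Type*) [RCLike 𝕜] (U V U' V' : Type*)
    [NormedAddCommGroup U] [NormedSpace 𝕜 U] [FiniteDimensional 𝕜 U]
    [NormedAddCommGroup V] [NormedSpace 𝕜 V] [FiniteDimensional 𝕜 V]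
    [NormedAddCommGroup U'] [NormedSpace 𝕜 U'] [FiniteDimensional 𝕜 U']
    [NormedAddCommGroup V'] [NormedSpace 𝕜 V'] [FiniteDimensional 𝕜 V']
    (A B : U →ₗ[𝕜] V) (A' B' : U' →ₗ[𝕜] V')
    (hA : Function.Surjective A) (hB : Function.Surjective B)
    (hA' : Function.Surjective A') (hB' : Function.Surjective B')
    (φ : U ≃ₜ U') (ψ : V ≃ₜ V')
    (hcA : ∀ u : U, ψ (A u) = A' (φ u)) (hcB : ∀ u : U, ψ (B u) = B' (φ u)) :
    (∀ v : V, ψ '' ((fun w => v + w) '' (Submodule.map A (LinearMap.ker B) : Set V)) =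
      (fun w => ψ v + w) '' (Submodule.map A' (LinearMap.ker B') : Set V')) ∧
    ∃ ψ₂ : (V ⧸ Submodule.map A (LinearMap.ker B)) ≃ₜ
        (V' ⧸ Submodule.map A' (LinearMap.ker B')),
      ∀ v : V, ψ₂ (Submodule.Quotient.mk v) = Submodule.Quotient.mk (ψ v) :=
  stmt5_general 𝕜 U V U' V' A B A' B' hA hA' φ ψ hcA hcB
end

section
/- Let (A,B) = (L_kᵀ, R_kᵀ) be the pair of k×(k−1) matrices (transposes of the Kronecker shift matrices), viewed as linear maps F^{k−1} → F^k with k ≥ 2. Then im B has dimension k−1, A⁻¹(im B) has dimension k−2, and the pair of restrictions A, B : A⁻¹(im B) → im B is linearly equivalent to (L_{k−1}ᵀ, R_{k−1}ᵀ). -/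
/-- The (k−1)×k Kronecker shift matrix L_k: ones in positions (i,i). -/
def Lmat (F : Type*) [Field F] (k : ℕ) : Matrix (Fin (k - 1)) (Fin k) F :=
  fun i j => if (j : ℕ) = (i : ℕ) then 1 else 0

/-- The (k−1)×k Kronecker shift matrix R_k: ones in positions (i,i+1). -/
def Rmat (F : Type*) [Field F] (k : ℕ) : Matrix (Fin (k - 1)) (Fin k) F :=
  fun i j => if (j : ℕ) = (i : ℕ) + 1 then 1 else 0

open Matrix

/-!
As maps `F^n → F^(n+1)`, `L_{n+1}ᵀ` appends a zero coordinate and `R_{n+1}ᵀ` prepends one.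
Hence `B = R_kᵀ` is injective with image `{y | y 0 = 0}`, and `A⁻¹(im B) = {x | x 0 = 0}`.
Writing such an `x` as `Fin.cons 0 v`, the identity `cons 0 (snoc v 0) = snoc (cons 0 v) 0`
gives `A x = B (L_{k-1}ᵀ v)`, while `B x = B (R_{k-1}ᵀ v)`; so `x ↦ v` and `B⁻¹` on
`im B` realise the equivalence.
-/

namespace Submodule

variable {R M : Type*} [Semiring R] [AddCommMonoid M] [Module R M] {m : ℕ}

def tailEquiv (p : Submodule R (Fin (m + 1) → M)) (hp : ∀ x, x ∈ p ↔ x 0 = 0) :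
    p ≃ₗ[R] (Fin m → M) where
  toFun u := Fin.tail (u : Fin (m + 1) → M)
  invFun v := ⟨Fin.cons 0 v, (hp _).2 rfl⟩
  map_add' _ _ := rfl
  map_smul' _ _ := rfl
  left_inv u := Subtype.ext <| by
    change Fin.cons 0 (Fin.tail (u : Fin (m + 1) → M)) = u
    rw [← (hp _).1 u.2, Fin.cons_self_tail]
  right_inv v := Fin.tail_cons _ _

end Submodule

section ShiftMatrices

variable {F : Type*} [Field F]

theorem Lmat_transpose_mulVec (n : ℕ) (w : Fin n → F) :
    (Lmat F (n + 1))ᵀ *ᵥ w = Fin.snoc w 0 := by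
  funext j
  induction j using Fin.lastCases with
  | last => simp [mulVec, dotProduct, Lmat, Fin.val_last, Fin.is_lt, Nat.ne_of_gt]
  | cast j => simp [mulVec, dotProduct, Lmat, Fin.val_eq_val]

theorem Rmat_transpose_mulVec (n : ℕ) (w : Fin n → F) :
    (Rmat F (n + 1))ᵀ *ᵥ w = Fin.cons 0 w := by
  funext j
  induction j using Fin.cases with
  | zero => simp [mulVec, dotProduct, Rmat]
  | succ j => simp [mulVec, dotProduct, Rmat, Fin.val_eq_val]

theorem Rmat_transpose_mulVecLin_injective (n : ℕ) :
    Function.Injective (Rmat F (n + 1))ᵀ.mulVecLin := by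
  intro x y h
  simp only [mulVecLin_apply, Rmat_transpose_mulVec] at h
  exact Fin.cons_right_injective _ h

theorem mem_range_Rmat_transpose_iff (n : ℕ) (y : Fin (n + 1) → F) :
    y ∈ LinearMap.range (Rmat F (n + 1))ᵀ.mulVecLin ↔ y 0 = 0 := by
  constructor
  · rintro ⟨x, rfl⟩
    rw [mulVecLin_apply, Rmat_transpose_mulVec, Fin.cons_zero]
  · intro hy
    refine ⟨Fin.tail y, ?_⟩
    rw [mulVecLin_apply, Rmat_transpose_mulVec, ← hy, Fin.cons_self_tail]

theorem mem_comap_Lmat_transpose_range_Rmat_transpose_iff (m : ℕ) (x : Fin (m + 1) → F) :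
    x ∈ (LinearMap.range (Rmat F (m + 2))ᵀ.mulVecLin).comap (Lmat F (m + 2))ᵀ.mulVecLin ↔
      x 0 = 0 := by
  rw [Submodule.mem_comap, mulVecLin_apply, mem_range_Rmat_transpose_iff,
    Lmat_transpose_mulVec, Fin.snoc_apply_zero]

theorem Rmat_transpose_mulVec_tail (m : ℕ) (x : Fin (m + 1) → F) (hx : x 0 = 0) :
    (Rmat F (m + 1))ᵀ *ᵥ Fin.tail x = x := by
  rw [Rmat_transpose_mulVec, ← hx, Fin.cons_self_tail]

theorem Lmat_transpose_mulVec_eq_Rmat_transpose_mulVec (m : ℕ) (x : Fin (m + 1) → F)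
    (hx : x 0 = 0) :
    (Lmat F (m + 2))ᵀ *ᵥ x = (Rmat F (m + 2))ᵀ *ᵥ ((Lmat F (m + 1))ᵀ *ᵥ Fin.tail x) := by
  conv_lhs => rw [← Rmat_transpose_mulVec_tail m x hx]
  simp only [Lmat_transpose_mulVec, Rmat_transpose_mulVec, Fin.cons_snoc_eq_snoc_cons]

end ShiftMatrices

/-- For the pair (A,B) = (L_kᵀ, R_kᵀ) : F^{k−1} → F^k with k ≥ 2:
im B has dimension k−1, A⁻¹(im B) has dimension k−2, and the restricted pair
A, B : A⁻¹(im B) → im B is linearly equivalent to (L_{k−1}ᵀ, R_{k−1}ᵀ). -/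
theorem stmt13 (F : Type*) [Field F] (k : ℕ) (hk : 2 ≤ k) :
    letI A : (Fin (k - 1) → F) →ₗ[F] (Fin k → F) := ((Lmat F k)ᵀ).mulVecLin
    letI B : (Fin (k - 1) → F) →ₗ[F] (Fin k → F) := ((Rmat F k)ᵀ).mulVecLin
    Module.finrank F (LinearMap.range B) = k - 1 ∧
    Module.finrank F (Submodule.comap A (LinearMap.range B)) = k - 2 ∧
    ∃ (φ : ↥(Submodule.comap A (LinearMap.range B)) ≃ₗ[F] (Fin (k - 1 - 1) → F))
      (ψ : ↥(LinearMap.range B) ≃ₗ[F] (Fin (k - 1) → F)),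
      ∀ u : ↥(Submodule.comap A (LinearMap.range B)),
        ψ (A.restrict (fun _ hx => hx) u) = ((Lmat F (k - 1))ᵀ).mulVecLin (φ u) ∧
        ψ (B.restrict (fun x _ => LinearMap.mem_range_self B x) u) =
          ((Rmat F (k - 1))ᵀ).mulVecLin (φ u) := by
  obtain ⟨m, rfl⟩ : ∃ m, k = m + 2 := ⟨k - 2, by omega⟩
  have hB : Function.Injective (Rmat F (m + 2))ᵀ.mulVecLin :=
    Rmat_transpose_mulVecLin_injective (m + 1)
  have hC := mem_comap_Lmat_transpose_range_Rmat_transpose_iff (F := F) m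
  let φ := Submodule.tailEquiv _ hC
  let ψ := (LinearEquiv.ofInjective _ hB).symm
  have hψ (z : LinearMap.range (Rmat F (m + 2))ᵀ.mulVecLin) (w : Fin (m + 1) → F)
      (h : (z : Fin (m + 2) → F) = (Rmat F (m + 2))ᵀ *ᵥ w) : ψ z = w :=
    hB ((LinearEquiv.ofInjective_symm_apply _ z).trans h)
  refine ⟨?_, φ.finrank_eq.trans (by simp), φ, ψ, fun ⟨x, hx⟩ => ?_⟩
  · rw [LinearMap.finrank_range_of_inj hB]
    simp
  have hx0 := (hC x).1 hx
  exact ⟨hψ _ _ (Lmat_transpose_mulVec_eq_Rmat_transpose_mulVec m x hx0),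
    hψ _ _ (congrArg ((Rmat F (m + 2))ᵀ *ᵥ ·) (Rmat_transpose_mulVec_tail m x hx0).symm)⟩
end

section
/- Let A, B : U → V and A', B' : U' → V' be pairs of linear bijections of finite-dimensional vector spaces over a field F. Then (A,B) is linearly equivalent to (A',B') if and only if dim U = dim U' and A⁻¹B is similar to A'⁻¹B' (as linear operators). -/
section Intertwining

variable {R U V U' V' : Type*} [Semiring R]
  [AddCommMonoid U] [Module R U] [AddCommMonoid V] [Module R V]
  [AddCommMonoid U'] [Module R U'] [AddCommMonoid V'] [Module R V']
  {A : U ≃ₗ[R] V} {A' : U' ≃ₗ[R] V'} {B : U →ₗ[R] V} {B' : U' →ₗ[R] V'}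

theorem intertwines_symm_comp_of_intertwines {φ : U →ₗ[R] U'} {ψ : V →ₗ[R] V'}
    (hA : ∀ u, ψ (A u) = A' (φ u)) (hB : ∀ u, ψ (B u) = B' (φ u)) (u : U) :
    φ (A.symm (B u)) = A'.symm (B' (φ u)) := by
  rw [A'.eq_symm_apply, ← hA, A.apply_symm_apply, hB]

theorem exists_intertwining_of_intertwines_symm_comp (φ : U ≃ₗ[R] U')
    (h : ∀ u, φ (A.symm (B u)) = A'.symm (B' (φ u))) :
    ∃ ψ : V ≃ₗ[R] V', (∀ u, ψ (A u) = A' (φ u)) ∧ ∀ u, ψ (B u) = B' (φ u) :=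
  ⟨A.symm.trans (φ.trans A'), fun u => by simp, fun u => by simp [h u]⟩

end Intertwining

theorem stmt15_general (F : Type*) [Field F] (U V U' V' : Type*)
    [AddCommGroup U] [Module F U] [AddCommGroup V] [Module F V]
    [AddCommGroup U'] [Module F U'] [AddCommGroup V'] [Module F V']
    (A B : U ≃ₗ[F] V) (A' B' : U' ≃ₗ[F] V') :
    (∃ (φ : U ≃ₗ[F] U') (ψ : V ≃ₗ[F] V'),
        (∀ u : U, ψ (A u) = A' (φ u)) ∧ (∀ u : U, ψ (B u) = B' (φ u))) ↔
    (Module.finrank F U = Module.finrank F U' ∧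
      ∃ φ : U ≃ₗ[F] U', ∀ u : U, φ (A.symm (B u)) = A'.symm (B' (φ u))) := by
  constructor
  · rintro ⟨φ, ψ, hA, hB⟩
    exact ⟨φ.finrank_eq, φ, intertwines_symm_comp_of_intertwines hA hB⟩
  · rintro ⟨-, φ, h⟩
    exact ⟨φ, exists_intertwining_of_intertwines_symm_comp φ h⟩

/-- Two pairs of linear bijections (A,B) : U → V and (A',B') : U' → V' are linearly
equivalent iff dim U = dim U' and A⁻¹B is similar to A'⁻¹B'. -/
theorem stmt15 (F : Type*) [Field F] (U V U' V' : Type*)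
    [AddCommGroup U] [Module F U] [AddCommGroup V] [Module F V]
    [AddCommGroup U'] [Module F U'] [AddCommGroup V'] [Module F V']
    [FiniteDimensional F U] [FiniteDimensional F V]
    [FiniteDimensional F U'] [FiniteDimensional F V']
    (A B : U ≃ₗ[F] V) (A' B' : U' ≃ₗ[F] V') :
    (∃ (φ : U ≃ₗ[F] U') (ψ : V ≃ₗ[F] V'),
        (∀ u : U, ψ (A u) = A' (φ u)) ∧ (∀ u : U, ψ (B u) = B' (φ u))) ↔
    (Module.finrank F U = Module.finrank F U' ∧
      ∃ φ : U ≃ₗ[F] U', ∀ u : U, φ (A.symm (B u)) = A'.symm (B' (φ u))) :=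
  stmt15_general F U V U' V' A B A' B'
end
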